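/- Let R be a commutative Noetherian ℕ-graded ring and M a ℤ-graded R-module (so R = ⊕_{i≥0} R_i, M = ⊕_{j∈ℤ} M_j, and R_i·M_j ⊆ M_{i+j}). For every integer r and every prime ideal p of R_0 that is an associated prime of the R_0-module M_r, there exists a homogeneous prime ideal P of R with P ∈ Ass_R M and P ∩ R_0 = p. Consequently, if the set of associated primes of M over R_0 is infinite, then the set Ass_R M is infinite. -/

import Mathlib

/-!
The `R₀`-action on `M` factors through the image of `R₀` in `R`, which is `R_0`, a quotient of
`R`, hence Noetherian; so an associated prime `p` of `M` over `R₀` is the annihilator of an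
element, and, being prime, the annihilator of one of its homogeneous components. Among the
homogeneous `y` with `ann_{R₀} y = p` pick one with `ann_R y` maximal (`R` is Noetherian). The
annihilator of a homogeneous element is homogeneous, and it contracts to `ann_{R₀} y = p`. It is
prime: for homogeneous `b, c` with `b c y = 0`, either `ann_{R₀} (b y) = p`, and maximality gives
`ann_R (b y) = ann_R y ∋ c`, or some `s ∉ p` kills `b y`, and maximality applied to `s y` (whose
`R₀`-annihilator is still `p`) gives `b ∈ ann_R (s y) = ann_R y`.
-/

open DirectSum

theorem Submodule.mem_bot_colon_singleton {A N : Type*} [CommRing A] [AddCommGroup N]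
    [Module A N] {y : N} {a : A} : a ∈ (⊥ : Submodule A N).colon {y} ↔ a • y = 0 := by
  rw [Submodule.mem_colon_singleton, Submodule.mem_bot]

open Submodule (mem_bot_colon_singleton)

section Colon

variable {A N : Type*} [CommRing A] [AddCommGroup N] [Module A N]

theorem bot_colon_smul_eq_of_notMem {y : N} {s : A}
    (hp : ((⊥ : Submodule A N).colon {y}).IsPrime) (hs : s ∉ (⊥ : Submodule A N).colon {y}) :
    (⊥ : Submodule A N).colon {s • y} = (⊥ : Submodule A N).colon {y} := by
  ext t
  rw [mem_bot_colon_singleton, smul_smul, ← mem_bot_colon_singleton]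
  exact ⟨fun h ↦ (hp.mem_or_mem h).resolve_right hs, fun h ↦ Ideal.mul_mem_right _ _ h⟩

theorem bot_colon_le_bot_colon_smul {S : Type*} [Monoid S] [DistribMulAction S N]
    [SMulCommClass S A N] (y : N) (s : S) :
    (⊥ : Submodule A N).colon {y} ≤ (⊥ : Submodule A N).colon {s • y} := fun a ha ↦ by
  rw [mem_bot_colon_singleton] at ha ⊢
  rw [← smul_comm, ha, smul_zero]

theorem exists_eq_bot_colon_of_isAssociatedPrime {K : Ideal A} [IsNoetherianRing (A ⧸ K)]
    (hK : Module.IsTorsionBySet A N K) {p : Ideal A} (hp : IsAssociatedPrime p N) :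
    ∃ x : N, p = (⊥ : Submodule A N).colon {x} := by
  let _ : Module (A ⧸ K) N := hK.module
  obtain ⟨hp, x, hpx⟩ := hp
  have hKp : K ≤ p := fun k hk ↦
    hpx ▸ Ideal.le_radical (mem_bot_colon_singleton.mpr (@hK x ⟨k, hk⟩))
  have hmem (a : A) : Ideal.Quotient.mk K a ∈ p.map (Ideal.Quotient.mk K) ↔ a ∈ p :=
    Ideal.mem_quotient_iff_mem hKp
  have hass : IsAssociatedPrime (p.map (Ideal.Quotient.mk K)) N := by
    refine ⟨Ideal.map_isPrime_of_surjective Ideal.Quotient.mk_surjective (by rwa [Ideal.mk_ker]),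
      x, ?_⟩
    ext q
    obtain ⟨a, rfl⟩ := Ideal.Quotient.mk_surjective q
    rw [hmem, hpx]
    simp only [Ideal.mem_radical_iff, mem_bot_colon_singleton, ← map_pow,
      Module.IsTorsionBySet.mk_smul]
  obtain ⟨-, x', hx'⟩ := isAssociatedPrime_iff.mp hass
  refine ⟨x', Ideal.ext fun a ↦ ?_⟩
  rw [← hmem, hx', mem_bot_colon_singleton, mem_bot_colon_singleton, Module.IsTorsionBySet.mk_smul]

theorem exists_bot_colon_decompose_eq {ι : Type*} [DecidableEq ι] (ℳ : ι → Submodule A N)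
    [Decomposition ℳ] {m : N} (hp : ((⊥ : Submodule A N).colon {m}).IsPrime) :
    ∃ j, (⊥ : Submodule A N).colon {(decompose ℳ m j : N)} = (⊥ : Submodule A N).colon {m} := by
  classical
  have hle (j : ι) :
      (⊥ : Submodule A N).colon {m} ≤ (⊥ : Submodule A N).colon {(decompose ℳ m j : N)} := by
    intro t ht
    rw [mem_bot_colon_singleton] at ht ⊢
    rw [← Submodule.coe_smul, ← DFinsupp.smul_apply, ← decompose_smul, ht, decompose_zero]
    rfl
  have hprod : ∏ j ∈ (decompose ℳ m).support,
      (⊥ : Submodule A N).colon {(decompose ℳ m j : N)} ≤ (⊥ : Submodule A N).colon {m} := by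
    intro t ht
    rw [mem_bot_colon_singleton, ← sum_support_decompose ℳ m, Finset.smul_sum]
    exact Finset.sum_eq_zero fun j hj ↦
      mem_bot_colon_singleton.mp ((Ideal.prod_le_inf.trans (Finset.inf_le hj)) ht)
  obtain ⟨j, -, hj⟩ := hp.prod_le.mp hprod
  exact ⟨j, le_antisymm hj (hle j)⟩

end Colon

theorem comap_bot_colon_singleton {R₀ R M : Type*} [CommRing R₀] [CommRing R] [Algebra R₀ R]
    [AddCommGroup M] [Module R M] [Module R₀ M] [IsScalarTower R₀ R M] (y : M) :
    ((⊥ : Submodule R M).colon {y}).comap (algebraMap R₀ R) = (⊥ : Submodule R₀ M).colon {y} := by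
  ext s
  rw [Ideal.mem_comap, mem_bot_colon_singleton, mem_bot_colon_singleton, algebraMap_smul]

section Graded

variable {R₀ R M : Type*} [CommRing R₀] [CommRing R] [Algebra R₀ R]
    [AddCommGroup M] [Module R M] [Module R₀ M]
    (𝒜 : ℕ → Submodule R₀ R) [GradedAlgebra 𝒜] (ℳ : ℤ → Submodule R₀ M) [Decomposition ℳ]

theorem coe_decompose_smul_of_mem
    (hsmul : ∀ (i : ℕ) (j : ℤ) (a : R) (x : M), a ∈ 𝒜 i → x ∈ ℳ j → a • x ∈ ℳ (i + j))
    {d : ℤ} {y : M} (hy : y ∈ ℳ d) (a : R) (i : ℕ) :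
    (decompose ℳ (a • y) (i + d) : M) = (decompose 𝒜 a i : R) • y := by
  classical
  conv_lhs => rw [← sum_support_decompose 𝒜 a, Finset.sum_smul, decompose_sum]
  rw [DFinsupp.finsetSum_apply, Submodule.coe_sum]
  refine (Finset.sum_eq_single i (fun k _ hki ↦ ?_) fun hi ↦ ?_).trans ?_
  · exact decompose_of_mem_ne ℳ (hsmul k d _ y (SetLike.coe_mem _) hy) (by omega)
  · rw [DFinsupp.notMem_support_iff.mp hi, ZeroMemClass.coe_zero, zero_smul, decompose_zero]
    rfl
  · exact decompose_of_mem_same ℳ (hsmul i d _ y (SetLike.coe_mem _) hy)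

theorem isHomogeneous_bot_colon_of_mem
    (hsmul : ∀ (i : ℕ) (j : ℤ) (a : R) (x : M), a ∈ 𝒜 i → x ∈ ℳ j → a • x ∈ ℳ (i + j))
    {d : ℤ} {y : M} (hy : y ∈ ℳ d) : ((⊥ : Submodule R M).colon {y}).IsHomogeneous 𝒜 := by
  intro i a ha
  rw [mem_bot_colon_singleton] at ha ⊢
  rw [← coe_decompose_smul_of_mem 𝒜 ℳ hsmul hy, ha, decompose_zero]
  rfl

theorem isPrime_bot_colon_of_maximal [IsScalarTower R₀ R M]
    (hsmul : ∀ (i : ℕ) (j : ℤ) (a : R) (x : M), a ∈ 𝒜 i → x ∈ ℳ j → a • x ∈ ℳ (i + j))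
    {d : ℤ} {y : M} (hy : y ∈ ℳ d) (hp : ((⊥ : Submodule R₀ M).colon {y}).IsPrime)
    (hmax : ∀ (e : ℤ), ∀ z ∈ ℳ e,
      (⊥ : Submodule R₀ M).colon {z} = (⊥ : Submodule R₀ M).colon {y} →
      (⊥ : Submodule R M).colon {y} ≤ (⊥ : Submodule R M).colon {z} →
      (⊥ : Submodule R M).colon {z} = (⊥ : Submodule R M).colon {y}) :
    ((⊥ : Submodule R M).colon {y}).IsPrime := by
  have hne_top : (⊥ : Submodule R M).colon {y} ≠ ⊤ := fun h ↦
    hp.ne_top (by rw [← comap_bot_colon_singleton (R := R), h, Ideal.comap_top])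
  refine (isHomogeneous_bot_colon_of_mem 𝒜 ℳ hsmul hy).isPrime_of_homogeneous_mem_or_mem hne_top ?_
  rintro b c ⟨i, hb⟩ - hbc
  rw [mem_bot_colon_singleton, mul_comm, mul_smul, ← mem_bot_colon_singleton] at hbc
  by_cases hby : (⊥ : Submodule R₀ M).colon {b • y} = (⊥ : Submodule R₀ M).colon {y}
  · right
    rwa [← hmax _ _ (hsmul i d b y hb hy) hby (bot_colon_le_bot_colon_smul y b)]
  · left
    obtain ⟨s, hsby, hs⟩ := SetLike.exists_of_lt
      ((bot_colon_le_bot_colon_smul y b).lt_of_ne (Ne.symm hby))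
    rw [← hmax _ _ (Submodule.smul_mem _ s hy) (bot_colon_smul_eq_of_notMem hp hs)
      (bot_colon_le_bot_colon_smul y s), mem_bot_colon_singleton, smul_comm,
      mem_bot_colon_singleton.mp hsby]

theorem exists_isHomogeneous_mem_associatedPrimes_comap_eq_bot_colon [IsNoetherianRing R]
    [IsScalarTower R₀ R M]
    (hsmul : ∀ (i : ℕ) (j : ℤ) (a : R) (x : M), a ∈ 𝒜 i → x ∈ ℳ j → a • x ∈ ℳ (i + j))
    {d : ℤ} {x : M} (hx : x ∈ ℳ d) (hp : ((⊥ : Submodule R₀ M).colon {x}).IsPrime) :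
    ∃ P ∈ associatedPrimes R M, P.IsHomogeneous 𝒜 ∧
      P.comap (algebraMap R₀ R) = (⊥ : Submodule R₀ M).colon {x} := by
  obtain ⟨_, ⟨e, y, hy, hyx, rfl⟩, hmax⟩ := set_has_maximal_iff_noetherian.mpr ‹_›
    {I | ∃ e, ∃ y ∈ ℳ e, (⊥ : Submodule R₀ M).colon {y} = (⊥ : Submodule R₀ M).colon {x} ∧
      I = (⊥ : Submodule R M).colon {y}} ⟨_, d, x, hx, rfl, rfl⟩
  rw [← hyx] at hp ⊢
  have hprime := isPrime_bot_colon_of_maximal 𝒜 ℳ hsmul hy hp fun e' z hz hzy hle ↦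
    by_contra fun hne ↦ hmax _ ⟨e', z, hz, hzy.trans hyx, rfl⟩ (hle.lt_of_ne (Ne.symm hne))
  exact ⟨_, isAssociatedPrime_iff.mpr ⟨hprime, y, rfl⟩,
    isHomogeneous_bot_colon_of_mem 𝒜 ℳ hsmul hy, comap_bot_colon_singleton y⟩

theorem isNoetherianRing_quotient_ker_algebraMap_gradeZero [IsNoetherianRing R]
    (h𝒜₀ : 𝒜 0 = Subalgebra.toSubmodule (⊥ : Subalgebra R₀ R)) :
    IsNoetherianRing (R₀ ⧸ RingHom.ker (algebraMap R₀ (𝒜 0))) := by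
  have hsurj : Function.Surjective (algebraMap R₀ (𝒜 0)) := by
    rintro ⟨a, ha⟩
    rw [h𝒜₀, Subalgebra.mem_toSubmodule, Algebra.mem_bot] at ha
    obtain ⟨s, rfl⟩ := ha
    exact ⟨s, rfl⟩
  exact isNoetherianRing_of_ringEquiv _ (RingHom.quotientKerEquivOfSurjective hsurj).symm

theorem exists_isHomogeneous_mem_associatedPrimes_comap_eq [IsNoetherianRing R]
    [IsScalarTower R₀ R M]
    (h𝒜₀ : 𝒜 0 = Subalgebra.toSubmodule (⊥ : Subalgebra R₀ R))
    (hsmul : ∀ (i : ℕ) (j : ℤ) (a : R) (x : M), a ∈ 𝒜 i → x ∈ ℳ j → a • x ∈ ℳ (i + j))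
    {p : Ideal R₀} (hp : p ∈ associatedPrimes R₀ M) :
    ∃ P ∈ associatedPrimes R M, P.IsHomogeneous 𝒜 ∧ P.comap (algebraMap R₀ R) = p := by
  have := isNoetherianRing_quotient_ker_algebraMap_gradeZero 𝒜 h𝒜₀
  have hK : Module.IsTorsionBySet R₀ M (RingHom.ker (algebraMap R₀ (𝒜 0))) := fun m k ↦ by
    have hk : algebraMap R₀ R k = 0 := ZeroMemClass.coe_eq_zero.mpr (RingHom.mem_ker.mp k.2)
    rw [← algebraMap_smul R, hk, zero_smul]
  obtain ⟨m, rfl⟩ := exists_eq_bot_colon_of_isAssociatedPrime hK hp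
  obtain ⟨j, hj⟩ := exists_bot_colon_decompose_eq ℳ hp.isPrime
  rw [← hj] at hp ⊢
  exact exists_isHomogeneous_mem_associatedPrimes_comap_eq_bot_colon 𝒜 ℳ hsmul
    (SetLike.coe_mem _) hp.isPrime

end Graded

theorem stmt_3 {R₀ R M : Type} [CommRing R₀] [CommRing R] [IsNoetherianRing R] [Algebra R₀ R]
    [AddCommGroup M] [Module R M] [Module R₀ M] [IsScalarTower R₀ R M]
    (𝒜 : ℕ → Submodule R₀ R) [GradedAlgebra 𝒜]
    (h𝒜₀ : 𝒜 0 = Subalgebra.toSubmodule (⊥ : Subalgebra R₀ R))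
    (ℳ : ℤ → Submodule R₀ M) [DirectSum.Decomposition ℳ]
    (hsmul : ∀ (i : ℕ) (j : ℤ) (a : R) (x : M), a ∈ 𝒜 i → x ∈ ℳ j → a • x ∈ ℳ (i + j)) :
    (∀ (r : ℤ) (p : Ideal R₀), p ∈ associatedPrimes R₀ (ℳ r) →
      ∃ P ∈ associatedPrimes R M, P.IsHomogeneous 𝒜 ∧ P.comap (algebraMap R₀ R) = p) ∧
    ((associatedPrimes R₀ M).Infinite → (associatedPrimes R M).Infinite) := by
  have hlift {p : Ideal R₀} (hp : p ∈ associatedPrimes R₀ M) :=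
    exists_isHomogeneous_mem_associatedPrimes_comap_eq 𝒜 ℳ h𝒜₀ hsmul hp
  refine ⟨fun r p hp ↦ hlift (hp.map_of_injective (ℳ r).subtype Subtype.val_injective),
    fun hinf ↦ .of_image (Ideal.comap (algebraMap R₀ R)) (hinf.mono fun p hp ↦ ?_)⟩
  obtain ⟨P, hP, -, hPp⟩ := hlift hp
  exact ⟨P, hP, hPp⟩
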